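/- Let J_n be an n×n matrix of the form: tridiagonal with real diagonal entries c_1,...,c_{n−1} and complex a_n in position (n,n), superdiagonal entries b_1,...,b_{n−1} ∈ ℂ∖{0} with conjugates below, and corner entries (1,n) = conj(b_n), (n,1) = b_n with b_n ∈ ℂ∖{0}. Let J_{n−1} be its leading principal (n−1)×(n−1) submatrix with eigenvalues μ_1 < ... < μ_{n−1}, and χ_n, χ_{n−1} the characteristic polynomials of J_n and J_{n−1}. Then for each k = 1,...,n−1, (−1)^{n−k} χ_n(μ_k) ≥ 0. -/

import Mathlib

/-!
Write `J_n` in block form: the leading block `A = J_{n-1}` is Hermitian, the last column is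
some vector `v`, and the corner and subdiagonal entries make the last row `v*`. At an eigenvalue
`μ` of `A` the determinant `det (μ - J_n)` is affine in the corner entry with slope
`det (μ - A) = 0`, so it equals `det (μ - A - v v*)`. Diagonalising `A = U diag(λ) U*` turns
this into `det (diag (μ - λ) - c c*)` with `c = U* v`, and since `μ - λ_i = 0` for some `i`
this is `-|c_i|² ∏_{j ≠ i} (μ - λ_j) = -|c_i|² χ_{n-1}'(μ)`. Finally
`χ_{n-1}'(μ_k) = ∏_{j ≠ k} (μ_k - μ_j)` has exactly `n - 1 - k` negative factors.
-/

open Polynomial Matrix Finset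

noncomputable section

/-- The corner-bordered complex Jacobi matrix of the class `𝒥_n`: real diagonal
entries `c 0, …, c (n−2)`, complex entry `a` at position `(n−1, n−1)`, superdiagonal
entries `b 0, …, b (n−2)` with their conjugates on the subdiagonal, and corner entries
`conj (b (n−1))` at `(0, n−1)` and `b (n−1)` at `(n−1, 0)`. -/
def cornerJacobi (n : ℕ) (c : ℕ → ℝ) (b : ℕ → ℂ) (a : ℂ) :
    Matrix (Fin n) (Fin n) ℂ :=
  Matrix.of fun i j =>
    if (i : ℕ) = (j : ℕ) then (if (i : ℕ) = n - 1 then a else ((c (i : ℕ) : ℝ) : ℂ))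
    else if (i : ℕ) = 0 ∧ (j : ℕ) = n - 1 then (starRingEnd ℂ) (b (n - 1))
    else if (i : ℕ) = n - 1 ∧ (j : ℕ) = 0 then b (n - 1)
    else if (i : ℕ) + 1 = (j : ℕ) then b (i : ℕ)
    else if (j : ℕ) + 1 = (i : ℕ) then (starRingEnd ℂ) (b (j : ℕ))
    else 0

/-- The leading principal `(n−1)×(n−1)` submatrix of `cornerJacobi n c b a`. -/
def cornerJacobiSub (n : ℕ) (c : ℕ → ℝ) (b : ℕ → ℂ) (a : ℂ) :
    Matrix (Fin (n - 1)) (Fin (n - 1)) ℂ :=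
  (cornerJacobi n c b a).submatrix (Fin.castLE (Nat.sub_le n 1)) (Fin.castLE (Nat.sub_le n 1))

theorem Polynomial.eval_derivative_prod_X_sub_C {ι R : Type*} [Fintype ι] [DecidableEq ι]
    [CommRing R] (v : ι → R) (i : ι) :
    (∏ j, (X - C (v j))).derivative.eval (v i) = ∏ j ∈ univ.erase i, (v i - v j) := by
  simpa [Lagrange.nodal, eval_prod] using
    Lagrange.eval_nodal_derivative_eval_node_eq (s := univ) (v := v) (mem_univ i)

namespace Matrix

section CommRing

variable {n ι R : Type*} [Fintype n] [DecidableEq n] [Fintype ι] [DecidableEq ι] [CommRing R]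

-- The determinant is affine in the `ι`-row, and the coefficient of the corner entry is `det A`.
theorem det_fromBlocks_eq_of_det_eq_zero [Unique ι] (A : Matrix n n R) (B : Matrix n ι R)
    (C : Matrix ι n R) (D D' : Matrix ι ι R) (hA : det A = 0) :
    det (fromBlocks A B C D) = det (fromBlocks A B C D') := by
  set r : n ⊕ ι := Sum.inr default
  have hrow : fromBlocks A B C D = updateRow (fromBlocks A B C D') r
      (fromBlocks A B C D' r + (D default default - D' default default) • Pi.single r 1) := by
    ext (i | i) (j | j) <;> simp [r, updateRow_apply, Unique.eq_default]
  have hsingle : updateRow (fromBlocks A B C D') r (Pi.single r 1) = fromBlocks A B 0 1 := by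
    ext (i | i) (j | j) <;> simp [r, updateRow_apply, Unique.eq_default]
  rw [hrow, det_updateRow_add, updateRow_eq_self, det_updateRow_smul, hsingle,
    det_fromBlocks_zero₂₁, hA, zero_mul, mul_zero, add_zero]

theorem det_succ_eq_det_sub_vecMulVec_of_det_eq_zero {k : ℕ}
    (M : Matrix (Fin (k + 1)) (Fin (k + 1)) R)
    (hM : det (M.submatrix Fin.castSucc Fin.castSucc) = 0) :
    det M = det (M.submatrix Fin.castSucc Fin.castSucc -
      vecMulVec (fun i => M i.castSucc (Fin.last k)) (fun j => M (Fin.last k) j.castSucc)) := by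
  have hblocks : M.submatrix finSumFinEquiv finSumFinEquiv =
      fromBlocks (M.submatrix Fin.castSucc Fin.castSucc)
        (replicateCol (Fin 1) fun i => M i.castSucc (Fin.last k))
        (replicateRow (Fin 1) fun j => M (Fin.last k) j.castSucc)
        (of fun _ _ => M (Fin.last k) (Fin.last k)) := by
    ext (i | i) (j | j) <;> simp [Fin.fin_one_eq_zero] <;> rfl
  rw [← det_submatrix_equiv_self finSumFinEquiv M, hblocks,
    det_fromBlocks_eq_of_det_eq_zero _ _ _ _ 1 hM, det_fromBlocks_one₂₂]
  congr 2
  ext i j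
  simp [vecMulVec_apply, mul_apply]

theorem det_one_add_vecMulVec (u v : n → R) : det (1 + vecMulVec u v) = 1 + v ⬝ᵥ u := by
  rw [vecMulVec_eq Unit, det_one_add_replicateCol_mul_replicateRow]

theorem det_diagonal_add_vecMulVec_of_eq_zero {δ : n → R} {k : n} (hk : δ k = 0)
    (u w : n → R) :
    det (diagonal δ + vecMulVec u w) = u k * w k * ∏ i ∈ univ.erase k, δ i := by
  set e : n → R := Pi.single k 1
  have hfactor : diagonal δ + vecMulVec u w = (1 + vecMulVec (u - e) e) *
      diagonal (Function.update δ k 1) * (1 + vecMulVec e (w - e)) := by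
    ext i j
    simp only [mul_apply, add_apply, vecMulVec_apply, e, Pi.single_apply, diagonal_apply,
      Function.update_apply, one_apply, Pi.sub_apply, add_mul, mul_add, sum_add_distrib]
    simp [sum_ite_eq']
    split_ifs <;> simp_all <;> ring
  rw [hfactor, det_mul, det_mul, det_one_add_vecMulVec, det_one_add_vecMulVec, det_diagonal,
    prod_update_of_mem (mem_univ k)]
  simp [e, sdiff_singleton_eq_erase]
  ring

theorem det_star_mul_mul_of_mem_unitaryGroup [StarRing R] {U : Matrix n n R}
    (hU : U ∈ unitaryGroup n R) (M : Matrix n n R) : det (star U * M * U) = det M := by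
  rw [det_mul, det_mul, mul_right_comm, ← det_mul, mem_unitaryGroup_iff'.mp hU, det_one,
    one_mul]

end CommRing

variable {𝕜 : Type*} [RCLike 𝕜]

theorem IsHermitian.det_eigenvalue_sub_sub_vecMulVec {n : Type*} [Fintype n] [DecidableEq n]
    {A : Matrix n n 𝕜} (hA : A.IsHermitian) (v : n → 𝕜) (i : n) :
    det (scalar n (hA.eigenvalues i : 𝕜) - A - vecMulVec v (star v)) =
      -(‖(star (hA.eigenvectorUnitary : Matrix n n 𝕜) *ᵥ v) i‖ ^ 2 : 𝕜) *
        A.charpoly.derivative.eval (hA.eigenvalues i : 𝕜) := by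
  set U : Matrix n n 𝕜 := ↑hA.eigenvectorUnitary
  set c := star U *ᵥ v
  have hU : star U * U = 1 := mem_unitaryGroup_iff'.mp hA.eigenvectorUnitary.2
  have hdiag : star U * A * U = diagonal (RCLike.ofReal ∘ hA.eigenvalues) := by
    simpa [Unitary.conjStarAlgAut_star_apply] using hA.conjStarAlgAut_star_eigenvectorUnitary
  have hc : star c = star v ᵥ* U := by
    rw [star_mulVec, ← star_eq_conjTranspose, star_star]
  have hconj : star U * (scalar n (hA.eigenvalues i : 𝕜) - A - vecMulVec v (star v)) * U =
      diagonal (fun j => (hA.eigenvalues i : 𝕜) - hA.eigenvalues j) +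
        vecMulVec (-c) (star c) := by
    rw [Matrix.mul_sub, Matrix.sub_mul, Matrix.mul_sub, Matrix.sub_mul, hdiag, mul_vecMulVec,
      vecMulVec_mul, scalar_apply, ← smul_one_eq_diagonal, Matrix.mul_smul, Matrix.smul_mul,
      Matrix.mul_one, hU, smul_one_eq_diagonal, diagonal_sub, neg_vecMulVec, ← sub_eq_add_neg,
      hc]
    rfl
  rw [← det_star_mul_mul_of_mem_unitaryGroup hA.eigenvectorUnitary.2, hconj,
    det_diagonal_add_vecMulVec_of_eq_zero (sub_self _), hA.charpoly_eq,
    eval_derivative_prod_X_sub_C (fun j => (hA.eigenvalues j : 𝕜)), ← RCLike.mul_conj]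
  simp [c]

theorem exists_eval_charpoly_eq_neg_mul_eval_derivative {k : ℕ}
    {J : Matrix (Fin (k + 1)) (Fin (k + 1)) 𝕜}
    (hA : (J.submatrix Fin.castSucc Fin.castSucc).IsHermitian)
    (hJ : ∀ j : Fin k, J (Fin.last k) j.castSucc = star (J j.castSucc (Fin.last k)))
    {x : ℝ} (hx : (J.submatrix Fin.castSucc Fin.castSucc).charpoly.IsRoot (x : 𝕜)) :
    ∃ r : ℝ, 0 ≤ r ∧ J.charpoly.eval (x : 𝕜) =
      -(r : 𝕜) * (J.submatrix Fin.castSucc Fin.castSucc).charpoly.derivative.eval (x : 𝕜) := by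
  set A := J.submatrix Fin.castSucc Fin.castSucc
  set v : Fin k → 𝕜 := fun j => J j.castSucc (Fin.last k)
  obtain ⟨i, rfl⟩ : ∃ i, hA.eigenvalues i = x := by
    have hprod : ∏ j, ((x : 𝕜) - hA.eigenvalues j) = 0 := by
      simpa [hA.charpoly_eq, eval_prod] using hx.eq_zero
    obtain ⟨i, -, hi⟩ := prod_eq_zero_iff.mp hprod
    exact ⟨i, by exact_mod_cast (sub_eq_zero.mp hi).symm⟩
  refine ⟨‖(star (hA.eigenvectorUnitary : Matrix (Fin k) (Fin k) 𝕜) *ᵥ v) i‖ ^ 2,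
    by positivity, ?_⟩
  set N := scalar (Fin (k + 1)) (hA.eigenvalues i : 𝕜) - J
  have hsub :
      N.submatrix Fin.castSucc Fin.castSucc = scalar (Fin k) (hA.eigenvalues i : 𝕜) - A := by
    ext a b
    simp [N, A, diagonal_apply]
  have hborder : vecMulVec (fun a => N a.castSucc (Fin.last k)) (fun b => N (Fin.last k) b.castSucc)
      = vecMulVec v (star v) := by
    ext a b
    simp [N, v, vecMulVec_apply, hJ, Fin.castSucc_ne_last, (Fin.castSucc_ne_last _).symm]
  rw [eval_charpoly,
    det_succ_eq_det_sub_vecMulVec_of_det_eq_zero N (by rwa [hsub, ← eval_charpoly]), hsub,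
    hborder, hA.det_eigenvalue_sub_sub_vecMulVec v i]
  push_cast
  rfl

end Matrix

theorem StrictMono.neg_one_pow_mul_prod_erase_sub_nonpos {m : ℕ} {μ : Fin m → ℝ}
    (hμ : StrictMono μ) (k : Fin m) :
    (-1 : ℝ) ^ (m - (k : ℕ)) * ∏ j ∈ univ.erase k, (μ k - μ j) ≤ 0 := by
  have hsign : (-1 : ℝ) ^ (m - (k : ℕ)) = -∏ j ∈ univ.erase k, (if k < j then -1 else 1) := by
    rw [prod_ite, prod_const, prod_const_one, mul_one, show m - (k : ℕ) = m - 1 - k + 1 by omega,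
      pow_succ, mul_neg_one, ← Fin.card_Ioi]
    congr 3
    ext j
    simp only [mem_filter, mem_erase, mem_univ, mem_Ioi, and_true]
    exact ⟨fun h => ⟨ne_of_gt h, h⟩, And.right⟩
  rw [hsign, neg_mul, ← prod_mul_distrib, neg_nonpos]
  refine prod_nonneg fun j hj => ?_
  split_ifs with hkj
  · linarith [hμ hkj]
  · linarith [hμ (lt_of_le_of_ne (not_lt.mp hkj) (ne_of_mem_erase hj))]

theorem cornerJacobiSub_isHermitian (n : ℕ) (c : ℕ → ℝ) (b : ℕ → ℂ) (a : ℂ) :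
    (cornerJacobiSub n c b a).IsHermitian := by
  ext i j
  have hi := i.isLt
  have hj := j.isLt
  simp only [conjTranspose_apply, cornerJacobiSub, submatrix_apply, cornerJacobi, of_apply,
    Fin.val_castLE]
  split_ifs <;> first
    | (exfalso; omega)
    | (rw [show (j : ℕ) = i by omega]; simp)
    | simp

theorem cornerJacobi_last_castSucc (m : ℕ) (c : ℕ → ℝ) (b : ℕ → ℂ) (a : ℂ) (j : Fin m) :
    cornerJacobi (m + 1) c b a (Fin.last m) j.castSucc =
      star (cornerJacobi (m + 1) c b a j.castSucc (Fin.last m)) := by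
  have hj := j.isLt
  simp only [cornerJacobi, of_apply, Fin.val_castSucc, Fin.val_last, Nat.add_sub_cancel,
    true_and, and_true]
  split_ifs <;> first
    | (exfalso; omega)
    | simp

theorem stmt7_general (n : ℕ) (c : ℕ → ℝ) (b : ℕ → ℂ) (a : ℂ)
    (μ : Fin (n - 1) → ℝ) (hμ : StrictMono μ)
    (hchar : (cornerJacobiSub n c b a).charpoly = ∏ j, (X - C ((μ j : ℂ)))) :
    ∀ k : Fin (n - 1),
      (((cornerJacobi n c b a).charpoly.eval ((μ k : ℂ))).im = 0) ∧
      0 ≤ (-1 : ℝ) ^ (n - 1 - (k : ℕ))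
          * (((cornerJacobi n c b a).charpoly.eval ((μ k : ℂ))).re) := by
  intro k
  rcases n with _ | m
  · exact k.elim0
  set J := cornerJacobi (m + 1) c b a
  have hchar' : (J.submatrix Fin.castSucc Fin.castSucc).charpoly = ∏ j, (X - C (μ j : ℂ)) :=
    hchar
  have hroot : (J.submatrix Fin.castSucc Fin.castSucc).charpoly.IsRoot (μ k : ℂ) := by
    rw [hchar', IsRoot, eval_prod]
    exact prod_eq_zero (mem_univ k) (by simp)
  obtain ⟨r, hr, heval⟩ := exists_eval_charpoly_eq_neg_mul_eval_derivative
    (cornerJacobiSub_isHermitian (m + 1) c b a) (cornerJacobi_last_castSucc m c b a) hroot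
  rw [RCLike.ofReal_eq_complex_ofReal, hchar', eval_derivative_prod_X_sub_C (fun j => (μ j : ℂ))]
    at heval
  have hreal :
      J.charpoly.eval (μ k : ℂ) = ((-(r * ∏ j ∈ univ.erase k, (μ k - μ j)) : ℝ) : ℂ) := by
    rw [heval]
    push_cast
    ring
  rw [hreal, Complex.ofReal_im, Complex.ofReal_re]
  refine ⟨rfl, ?_⟩
  calc 0 ≤ r * -((-1) ^ (m + 1 - 1 - (k : ℕ)) * ∏ j ∈ univ.erase k, (μ k - μ j)) :=
        mul_nonneg hr (neg_nonneg.mpr (hμ.neg_one_pow_mul_prod_erase_sub_nonpos k))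
    _ = _ := by ring

/-- for `J_n ∈ 𝒥_n` with leading principal submatrix `J_{n−1}` having
eigenvalues `μ_1 < … < μ_{n−1}`, one has `(−1)^{n−k} χ_n(μ_k) ≥ 0` for all `k`
(the value `χ_n(μ_k)` being real). -/
theorem stmt7 (n : ℕ) (hn : 3 ≤ n) (c : ℕ → ℝ) (b : ℕ → ℂ) (a : ℂ)
    (hb : ∀ k : ℕ, k < n → b k ≠ 0)
    (μ : Fin (n - 1) → ℝ) (hμ : StrictMono μ)
    (hchar : (cornerJacobiSub n c b a).charpoly = ∏ j, (X - C ((μ j : ℂ)))) :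
    ∀ k : Fin (n - 1),
      (((cornerJacobi n c b a).charpoly.eval ((μ k : ℂ))).im = 0) ∧
      0 ≤ (-1 : ℝ) ^ (n - 1 - (k : ℕ))
          * (((cornerJacobi n c b a).charpoly.eval ((μ k : ℂ))).re) :=
  stmt7_general n c b a μ hμ hchar
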